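/- arXiv:1903.07850 — 3 statements merged into one kernel-verified Lean document; each statement's English description precedes it below -/
import Mathlib

section
/- For the U-shaped density f(x) = d·x^{2k} on [-c, c] with normalizing constant d = (2k+1)/(2c^{2k+1}), one has μ_6 / (9 μ_2^3) = (2k+3)^3 / (9 (2k+1)^2 (2k+7)), which is strictly less than 1 for every positive integer k. -/
open MeasureTheory intervalIntegral

lemma ushaped_moment (c : ℝ) (hc : 0 < c) (k : ℕ) (d : ℝ) (r : ℕ) (hr : Even r) :
    (∫ x in (-c)..c, x ^ r * (d * x ^ (2 * k)))
      = d * (2 * c ^ (r + 2 * k + 1)) / (r + 2 * k + 1) := by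
  have e : ∀ x : ℝ, x ^ r * (d * x ^ (2 * k)) = d * x ^ (r + 2 * k) := fun x => by
    rw [pow_add]; ring
  simp_rw [e, intervalIntegral.integral_const_mul, integral_pow]
  have hodd : Odd (r + 2 * k + 1) := by
    obtain ⟨m, hm⟩ := hr
    exact ⟨m + k, by omega⟩
  rw [hodd.neg_pow]
  push_cast
  ring

/-- For the U-shaped density `f(x) = d x^(2k)` on `[-c, c]` with `d = (2k+1)/(2 c^(2k+1))`,
one has `μ_6 / (9 μ_2³) = (2k+3)³ / (9 (2k+1)² (2k+7))`, which is strictly less than 1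
for every positive integer `k`. -/
theorem ushaped_moment_ratio (c : ℝ) (hc : 0 < c) (k : ℕ) (hk : 1 ≤ k) (d : ℝ)
    (hd : d = (2 * (k : ℝ) + 1) / (2 * c ^ (2 * k + 1))) (μ : ℕ → ℝ)
    (hμ : ∀ r : ℕ, μ r = ∫ x in (-c)..c, x ^ r * (d * x ^ (2 * k))) :
    μ 6 / (9 * μ 2 ^ 3) =
        (2 * (k : ℝ) + 3) ^ 3 / (9 * (2 * (k : ℝ) + 1) ^ 2 * (2 * (k : ℝ) + 7)) ∧
      (2 * (k : ℝ) + 3) ^ 3 / (9 * (2 * (k : ℝ) + 1) ^ 2 * (2 * (k : ℝ) + 7)) < 1 := by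
  have hcne : c ≠ 0 := hc.ne'
  have hck : c ^ (2 * k + 1) ≠ 0 := pow_ne_zero _ hcne
  have h3 : (2 : ℝ) * k + 3 ≠ 0 := by positivity
  have h7 : (2 : ℝ) * k + 7 ≠ 0 := by positivity
  have h1 : (2 : ℝ) * k + 1 ≠ 0 := by positivity
  have hμ2 : μ 2 = (2 * (k : ℝ) + 1) * c ^ 2 / (2 * (k : ℝ) + 3) := by
    rw [hμ, ushaped_moment c hc k d 2 (by decide), hd]
    have hpw : c ^ (2 + 2 * k + 1) = c ^ 2 * c ^ (2 * k + 1) := by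
      rw [← pow_add]; ring_nf
    push_cast
    rw [hpw]
    field_simp
    ring
  have hμ6 : μ 6 = (2 * (k : ℝ) + 1) * c ^ 6 / (2 * (k : ℝ) + 7) := by
    rw [hμ, ushaped_moment c hc k d 6 (by decide), hd]
    have hpw : c ^ (6 + 2 * k + 1) = c ^ 6 * c ^ (2 * k + 1) := by
      rw [← pow_add]; ring_nf
    push_cast
    rw [hpw]
    field_simp
    ring
  constructor
  · rw [hμ2, hμ6]
    field_simp
  · rw [div_lt_one (by positivity)]
    have hk' : (1 : ℝ) ≤ (k : ℝ) := by exact_mod_cast hk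
    nlinarith [sq_nonneg ((k : ℝ)), sq_nonneg ((k : ℝ) - 1), pow_pos (by linarith : (0:ℝ) < (k:ℝ)) 3]
end

section
/- For the sub-Gaussian family f(x) = c·exp(-x^{2k}) with k ≥ 2 an integer, the ratio Γ(1/(2k))² Γ(7/(2k)) / (9 Γ(3/(2k))³) is strictly less than 1. -/
/-!
With `t = 1/(2k)` and `Γ(s + 1) = s Γ(s)`, the ratio equals `3 Γ(1+t)² Γ(1+7t) / (7 Γ(1+3t)³)`,
and the claim holds for every real `t ∈ (0, 1/4]`. Write `f = log ∘ Γ` and `x = 1 + 3t`.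
Convexity of `f` together with `f(1) = f(2) = 0` and `f(y + 1) = f(y) + log y` gives
`f(1+t) ≤ f(x)/3`, `f(x + 4t) ≤ f(x) + 4t log x` and `f(x) ≥ -(1 - 3t) log x`,
so the logarithm of the ratio is at most `(4/3) log x - log(7/3)`,
which is negative because `x⁴ ≤ (7/4)⁴ < (7/3)³`.
-/

open Real Set

namespace Real

lemma log_Gamma_add_le {x h : ℝ} (hx : 0 < x) (h₀ : 0 ≤ h) (h₁ : h ≤ 1) :
    log (Gamma (x + h)) ≤ log (Gamma x) + h * log x := by
  have hconv := convexOn_log_Gamma.2 (mem_Ioi.2 hx) (mem_Ioi.2 (by linarith : 0 < x + 1))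
    (by linarith : 0 ≤ 1 - h) h₀ (by ring)
  simp only [smul_eq_mul, Function.comp_apply] at hconv
  rw [show (1 - h) * x + h * (x + 1) = x + h by ring, Gamma_add_one hx.ne',
    log_mul hx.ne' (Gamma_pos_of_pos hx).ne'] at hconv
  linarith

lemma neg_mul_log_le_log_Gamma {x : ℝ} (h₁ : 1 ≤ x) (h₂ : x ≤ 2) :
    -((2 - x) * log x) ≤ log (Gamma x) := by
  have h := log_Gamma_add_le (by linarith : 0 < x) (by linarith : 0 ≤ 2 - x) (by linarith)
  rw [add_sub_cancel, Gamma_two, log_one] at h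
  linarith

lemma log_Gamma_one_add_mul_le {s a : ℝ} (hs : 0 ≤ s) (ha₀ : 0 ≤ a) (ha₁ : a ≤ 1) :
    log (Gamma (1 + a * s)) ≤ a * log (Gamma (1 + s)) := by
  have hconv := convexOn_log_Gamma.2 (mem_Ioi.2 one_pos) (mem_Ioi.2 (by linarith : 0 < 1 + s))
    (by linarith : 0 ≤ 1 - a) ha₀ (by ring)
  simp only [smul_eq_mul, Function.comp_apply, Gamma_one, log_one] at hconv
  rwa [show (1 - a) * 1 + a * (1 + s) = 1 + a * s by ring, mul_zero, zero_add] at hconv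

end Real

lemma three_mul_Gamma_sq_mul_Gamma_lt {t : ℝ} (ht₀ : 0 < t) (ht : t ≤ 1 / 4) :
    3 * Gamma (1 + t) ^ 2 * Gamma (1 + 7 * t) < 7 * Gamma (1 + 3 * t) ^ 3 := by
  set x := 1 + 3 * t
  have h_t : log (Gamma (1 + t)) ≤ log (Gamma x) / 3 := by
    have h := log_Gamma_one_add_mul_le (by linarith : 0 ≤ 3 * t) (by norm_num : (0 : ℝ) ≤ 1 / 3)
      (by norm_num)
    rw [show 1 / 3 * (3 * t) = t by ring] at h
    linarith
  have h_7t : log (Gamma (1 + 7 * t)) ≤ log (Gamma x) + 4 * t * log x := by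
    rw [show 1 + 7 * t = x + 4 * t by ring]
    exact log_Gamma_add_le (by linarith) (by linarith) (by linarith)
  have h_3t : -((1 - 3 * t) * log x) ≤ log (Gamma x) := by
    rw [show 1 - 3 * t = 2 - x by ring]
    exact neg_mul_log_le_log_Gamma (by linarith) (by linarith)
  have h_numeric : log (x ^ 4) < log ((7 / 3) ^ 3) :=
    log_lt_log (by positivity) (by
      calc x ^ 4 ≤ (7 / 4) ^ 4 := by gcongr; linarith
        _ < (7 / 3) ^ 3 := by norm_num)
  refine (log_lt_log_iff (by positivity) (by positivity)).1 ?_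
  rw [log_mul (by positivity) (by positivity), log_mul (by norm_num) (by positivity),
    log_mul (by norm_num) (by positivity), log_pow, log_pow]
  rw [log_pow, log_pow, log_div (by norm_num) (by norm_num)] at h_numeric
  push_cast at h_numeric ⊢
  linarith

lemma Gamma_sq_mul_Gamma_div_lt_one {t : ℝ} (ht₀ : 0 < t) (ht : t ≤ 1 / 4) :
    Gamma t ^ 2 * Gamma (7 * t) / (9 * Gamma (3 * t) ^ 3) < 1 := by
  have h := three_mul_Gamma_sq_mul_Gamma_lt ht₀ ht
  rw [add_comm 1 t, add_comm 1 (7 * t), add_comm 1 (3 * t), Gamma_add_one ht₀.ne',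
    Gamma_add_one (by positivity), Gamma_add_one (by positivity)] at h
  rw [div_lt_one (by positivity)]
  refine lt_of_mul_lt_mul_left (a := 21 * t ^ 3) ?_ (by positivity)
  linarith

/-- For the sub-Gaussian family `f(x) = c exp(-x^(2k))` with integer `k ≥ 2`, the ratio
`Γ(1/(2k))² Γ(7/(2k)) / (9 Γ(3/(2k))³)` is strictly less than 1. -/
theorem subgaussian_ratio_lt_one (k : ℕ) (hk : 2 ≤ k) :
    Real.Gamma (1 / (2 * (k : ℝ))) ^ 2 * Real.Gamma (7 / (2 * (k : ℝ))) /
        (9 * Real.Gamma (3 / (2 * (k : ℝ))) ^ 3) < 1 := by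
  have hk' : (2 : ℝ) ≤ k := by exact_mod_cast hk
  have ht : 1 / (2 * (k : ℝ)) ≤ 1 / 4 :=
    one_div_le_one_div_of_le (by norm_num) (by linarith)
  rw [show 7 / (2 * (k : ℝ)) = 7 * (1 / (2 * k)) by ring,
    show 3 / (2 * (k : ℝ)) = 3 * (1 / (2 * k)) by ring]
  exact Gamma_sq_mul_Gamma_div_lt_one (by positivity) ht
end

section
/- For a distribution with finite moments of all orders, the sample r-th central moment satisfies √n·m̂_r = (1/√n)Σ(x_i - μ)^r - r μ_{r-1}·(1/√n)Σ(x_i - μ) + o_p(1), where m̂_r = (1/n)Σ(x_i - x̄)^r. -/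
/-!
Write `Wᵢ = Xᵢ - μ` and `h = μ - X̄ₙ`, so that `Xᵢ - X̄ₙ = Wᵢ + h`. Expanding `(Wᵢ + h)^r - Wᵢ^r`
binomially, the quantity in question equals `Yₙ (r μ_{r-1} - Qₙ)` exactly, where
`Yₙ = n^{-1/2} Σ Wᵢ` and `Qₙ = Σ_{k<r} C(r,k) h^{r-1-k} (1/n) Σ Wᵢ^k` is an averaged difference
quotient of `w ↦ w^r`. By Chebyshev's inequality `Yₙ` is bounded in probability, and by the
strong law `h → 0` and `(1/n) Σ Wᵢ^k → E[W₀^k]` almost surely, so `Qₙ → r μ_{r-1}` almost surely.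
A product of a sequence bounded in probability with one tending to `0` in probability tends
to `0` in probability.
-/

open MeasureTheory ProbabilityTheory Filter Finset
open scoped ENNReal Topology

lemma add_pow_sub_pow_eq_mul_sum {R : Type*} [CommRing R] (x h : R) (r : ℕ) :
    (x + h) ^ r - x ^ r = h * ∑ k ∈ range r, r.choose k * h ^ (r - 1 - k) * x ^ k := by
  rw [add_pow, sum_range_succ, Nat.choose_self, Nat.sub_self, pow_zero, Nat.cast_one, mul_one,
    mul_one, add_sub_cancel_right, mul_sum]
  refine sum_congr rfl fun k hk => ?_
  rw [show r - k = r - 1 - k + 1 by have := mem_range.1 hk; omega, pow_succ]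
  ring

noncomputable def sampleMean (x : ℕ → ℝ) (n : ℕ) : ℝ := (1 / n) * ∑ i ∈ range n, x i

lemma sampleMean_add_pow_sub_pow (x : ℕ → ℝ) (h : ℝ) (n r : ℕ) :
    sampleMean (fun i => (x i + h) ^ r) n - sampleMean (fun i => x i ^ r) n =
      h * ∑ k ∈ range r, r.choose k * h ^ (r - 1 - k) * sampleMean (fun i => x i ^ k) n := by
  simp only [sampleMean, ← mul_sub, ← sum_sub_distrib, add_pow_sub_pow_eq_mul_sum, ← mul_sum]
  rw [sum_comm, mul_left_comm, mul_sum]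
  congr 1
  refine sum_congr rfl fun k _ => ?_
  rw [mul_sum, mul_sum, mul_sum]
  exact sum_congr rfl fun i _ => by ring

lemma tendsto_sum_choose_mul_pow_mul {ι : Type*} {l : Filter ι} {h : ι → ℝ} {a : ℕ → ι → ℝ}
    {m : ℕ → ℝ} {r : ℕ} (hh : Tendsto h l (𝓝 0)) (ha : ∀ k < r, Tendsto (a k) l (𝓝 (m k))) :
    Tendsto (fun i => ∑ k ∈ range r, r.choose k * h i ^ (r - 1 - k) * a k i) l
      (𝓝 (r * m (r - 1))) := by
  have hlim := tendsto_finsetSum (range r) fun k hk =>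
    (tendsto_const_nhds (x := (r.choose k : ℝ))).mul (hh.pow (r - 1 - k)) |>.mul
      (ha k (mem_range.1 hk))
  convert hlim using 2
  rcases r with _ | r
  · simp
  rw [sum_range_succ, sum_eq_zero fun k hk => ?_]
  · simp
  rw [zero_pow (by have := mem_range.1 hk; omega)]
  ring

lemma sqrt_mul_sampleMean_sub_pow (x : ℕ → ℝ) (μ : ℝ) (n r : ℕ) :
    √(n : ℝ) * sampleMean (fun i => (x i - sampleMean x n) ^ r) n =
      1 / √(n : ℝ) * ∑ i ∈ range n, (x i - μ) ^ r - (1 / √(n : ℝ) * ∑ i ∈ range n, (x i - μ)) *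
        ∑ k ∈ range r, r.choose k * (μ - sampleMean x n) ^ (r - 1 - k) *
          sampleMean (fun i => (x i - μ) ^ k) n := by
  have hshift := sampleMean_add_pow_sub_pow (fun i => x i - μ) (μ - sampleMean x n) n r
  simp only [sub_add_sub_cancel] at hshift
  have hsqrt_inv : √(n : ℝ) * (1 / n) = 1 / √(n : ℝ) := by rw [mul_one_div, Real.sqrt_div_self']
  have hsqrt : √(n : ℝ) * (μ - sampleMean x n) = -(1 / √(n : ℝ) * ∑ i ∈ range n, (x i - μ)) := by
    have hsqrt_mul : 1 / √(n : ℝ) * n = √(n : ℝ) := by rw [one_div_mul_eq_div, Real.div_sqrt]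
    simp only [sampleMean, sum_sub_distrib, sum_const, card_range, nsmul_eq_mul]
    linear_combination -(∑ i ∈ range n, x i) * hsqrt_inv - μ * hsqrt_mul
  have hmean : sampleMean (fun i => (x i - μ) ^ r) n = 1 / n * ∑ i ∈ range n, (x i - μ) ^ r := rfl
  linear_combination √(n : ℝ) * hshift + √(n : ℝ) * hmean +
    (∑ k ∈ range r, r.choose k * (μ - sampleMean x n) ^ (r - 1 - k) *
      sampleMean (fun i => (x i - μ) ^ k) n) * hsqrt + (∑ i ∈ range n, (x i - μ) ^ r) * hsqrt_inv

section Probability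

variable {Ω ι : Type*} [MeasurableSpace Ω] {P : Measure Ω}

def BoundedInProbability (P : Measure Ω) (Y : ι → Ω → ℝ) : Prop :=
  ∀ δ : ℝ≥0∞, 0 < δ → ∃ M : ℝ, 0 < M ∧ ∀ i, P {ω | M ≤ |Y i ω|} ≤ δ

lemma BoundedInProbability.tendstoInMeasure_mul {l : Filter ι} {Y Z : ι → Ω → ℝ}
    (hY : BoundedInProbability P Y) (hZ : TendstoInMeasure P Z l fun _ => 0) :
    TendstoInMeasure P (fun i ω => Y i ω * Z i ω) l fun _ => 0 := by
  rw [tendstoInMeasure_iff_norm] at hZ ⊢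
  intro ε hε
  refine ENNReal.tendsto_nhds_zero.2 fun δ hδ => ?_
  obtain ⟨M, hM, hYM⟩ := hY (δ / 2) (ENNReal.half_pos hδ.ne')
  filter_upwards [ENNReal.tendsto_nhds_zero.1 (hZ (ε / M) (div_pos hε hM)) (δ / 2)
    (ENNReal.half_pos hδ.ne')] with i hZi
  have hsub : {ω | ε ≤ ‖Y i ω * Z i ω - 0‖} ⊆
      {ω | M ≤ |Y i ω|} ∪ {ω | ε / M ≤ ‖Z i ω - 0‖} := by
    intro ω hω
    by_contra! hlt
    simp only [Set.mem_union, Set.mem_ofPred_eq, not_or, not_le, sub_zero, Real.norm_eq_abs]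
      at hω hlt
    have : |Y i ω * Z i ω| < M * (ε / M) :=
      abs_mul (Y i ω) (Z i ω) ▸ mul_lt_mul'' hlt.1 hlt.2 (abs_nonneg _) (abs_nonneg _)
    rw [mul_div_cancel₀ ε hM.ne'] at this
    exact this.not_ge hω
  calc P {ω | ε ≤ ‖Y i ω * Z i ω - 0‖}
      ≤ P {ω | M ≤ |Y i ω|} + P {ω | ε / M ≤ ‖Z i ω - 0‖} :=
        (measure_mono hsub).trans (measure_union_le _ _)
    _ ≤ δ / 2 + δ / 2 := add_le_add (hYM i) hZi
    _ = δ := ENNReal.add_halves δ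

lemma boundedInProbability_of_variance_le [IsFiniteMeasure P] {Y : ι → Ω → ℝ} {C : ℝ}
    (hY : ∀ i, MemLp (Y i) 2 P) (hmean : ∀ i, P[Y i] = 0) (hvar : ∀ i, variance (Y i) P ≤ C) :
    BoundedInProbability P Y := by
  intro δ hδ
  have hlim : Tendsto (fun M : ℝ => ENNReal.ofReal (C / M ^ 2)) atTop (𝓝 0) := by
    simpa using ENNReal.tendsto_ofReal
      (tendsto_const_nhds.div_atTop (tendsto_pow_atTop two_ne_zero))
  obtain ⟨M, hMδ, hM⟩ := ((hlim.eventually (ge_mem_nhds hδ)).and (eventually_gt_atTop 0)).exists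
  refine ⟨M, hM, fun i => ?_⟩
  calc P {ω | M ≤ |Y i ω|} ≤ ENNReal.ofReal (variance (Y i) P / M ^ 2) := by
        simpa [hmean i] using meas_ge_le_variance_div_sq (hY i) hM
    _ ≤ ENNReal.ofReal (C / M ^ 2) := by gcongr; exact hvar i
    _ ≤ δ := hMδ

lemma boundedInProbability_sum_div_sqrt [IsFiniteMeasure P] {W : ℕ → Ω → ℝ}
    (hW : MemLp (W 0) 2 P) (hindep : Pairwise fun i j => IndepFun (W i) (W j) P)
    (hident : ∀ i, IdentDistrib (W i) (W 0) P P) (hmean : P[W 0] = 0) :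
    BoundedInProbability P fun (n : ℕ) ω => (1 / √(n : ℝ)) * ∑ i ∈ range n, W i ω := by
  have hWi : ∀ i, MemLp (W i) 2 P := fun i => (hident i).symm.memLp_snd hW
  have hsum : ∀ n, MemLp (∑ i ∈ range n, W i) 2 P := fun n => memLp_finsetSum' _ fun i _ => hWi i
  refine boundedInProbability_of_variance_le (C := variance (W 0) P) (fun n => ?_) (fun n => ?_)
    (fun n => ?_)
  · simpa using (hsum n).const_mul (1 / √n)
  · simp [integral_const_mul, integral_finsetSum _ fun i _ => (hWi i).integrable one_le_two,
      (hident _).integral_eq, hmean]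
  · have hvar : variance (∑ i ∈ range n, W i) P = n * variance (W 0) P := by
      rw [IndepFun.variance_sum (fun i _ => hWi i) fun i _ j _ hij => hindep hij]
      simp [(hident _).variance_eq]
    have hscale : variance (fun ω => 1 / √(n : ℝ) * ∑ i ∈ range n, W i ω) P =
        1 / n * (n * variance (W 0) P) := by
      have hc : (1 : ℝ) / n = (1 / √(n : ℝ)) ^ 2 := by
        rw [div_pow, one_pow, Real.sq_sqrt n.cast_nonneg]
      rw [← hvar, hc, ← variance_const_mul]
      simp only [Finset.sum_apply]
    rw [hscale]
    by_cases hn : (n : ℝ) = 0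
    · simp [hn, variance_nonneg]
    · rw [← mul_assoc, one_div_mul_cancel hn, one_mul]

lemma ae_tendsto_sampleMean_comp {β : Type*} [MeasurableSpace β] {X : ℕ → Ω → β}
    (hindep : Pairwise fun i j => IndepFun (X i) (X j) P)
    (hident : ∀ i, IdentDistrib (X i) (X 0) P P) {f : β → ℝ} (hf : Measurable f)
    (hint : Integrable (fun ω => f (X 0 ω)) P) :
    ∀ᵐ ω ∂P, Tendsto (fun n => sampleMean (fun i => f (X i ω)) n) atTop
      (𝓝 (∫ ω, f (X 0 ω) ∂P)) := by
  filter_upwards [strong_law_ae_real (fun i ω => f (X i ω)) hint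
    (fun i j hij => (hindep hij).comp hf hf) fun i => (hident i).comp hf] with ω hω
  simpa only [sampleMean, one_div_mul_eq_div] using hω

lemma MemLp.integrable_sub_const_pow [IsFiniteMeasure P] {f : Ω → ℝ} {k : ℕ} (hf : MemLp f k P)
    (c : ℝ) : Integrable (fun ω => (f ω - c) ^ k) P := by
  have hcentered := hf.sub (memLp_const c)
  refine (integrable_norm_iff (hcentered.aestronglyMeasurable.pow k)).1 ?_
  simpa [norm_pow] using hcentered.integrable_norm_pow'

lemma ae_tendsto_sum_choose_mul_sampleMean {X : ℕ → Ω → ℝ}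
    (hindep : Pairwise fun i j => IndepFun (X i) (X j) P)
    (hident : ∀ i, IdentDistrib (X i) (X 0) P P) (hint : Integrable (X 0) P) {μ : ℝ}
    (hμ : ∫ ω, X 0 ω ∂P = μ) (r : ℕ)
    (hmoment : ∀ k < r, Integrable (fun ω => (X 0 ω - μ) ^ k) P) :
    ∀ᵐ ω ∂P, Tendsto (fun n => ∑ k ∈ range r, r.choose k *
        (μ - sampleMean (fun i => X i ω) n) ^ (r - 1 - k) *
          sampleMean (fun i => (X i ω - μ) ^ k) n) atTop
      (𝓝 (r * ∫ ω, (X 0 ω - μ) ^ (r - 1) ∂P)) := by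
  filter_upwards [ae_tendsto_sampleMean_comp hindep hident measurable_id hint,
    (ae_ball_iff (Set.to_countable (Set.Iio r))).2 fun k hk =>
      ae_tendsto_sampleMean_comp hindep hident ((measurable_sub_const μ).pow_const k)
        (hmoment k hk)] with ω hmean hmoments
  exact tendsto_sum_choose_mul_pow_mul (by simpa [hμ] using hmean.const_sub μ) hmoments

end Probability

theorem sample_central_moment_expansion_general {Ω : Type*} [MeasurableSpace Ω]
    (P : Measure Ω) [IsProbabilityMeasure P] (X : ℕ → Ω → ℝ)
    (hindep : iIndepFun X P)
    (hident : ∀ i, IdentDistrib (X i) (X 0) P P)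
    (hLp : ∀ p : ℕ, MemLp (X 0) p P)
    (μ : ℝ) (hμ : ∫ ω, X 0 ω ∂P = μ)
    (r : ℕ)
    (μr1 : ℝ) (hμr1 : μr1 = ∫ ω, (X 0 ω - μ) ^ (r - 1) ∂P) :
    TendstoInMeasure P
      (fun (n : ℕ) (ω : Ω) =>
        Real.sqrt n *
            ((1 / (n : ℝ)) *
              ∑ i ∈ range n, (X i ω - (1 / (n : ℝ)) * ∑ j ∈ range n, X j ω) ^ r) -
          ((1 / Real.sqrt n) * ∑ i ∈ range n, (X i ω - μ) ^ r -
            (r : ℝ) * μr1 * ((1 / Real.sqrt n) * ∑ i ∈ range n, (X i ω - μ))))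
      atTop (fun _ => 0) := by
  have hpair : Pairwise fun i j => IndepFun (X i) (X j) P := fun i j hij => hindep.indepFun hij
  have hint : Integrable (X 0) P := (hLp 1).integrable (by norm_num)
  have hY := boundedInProbability_sum_div_sqrt (W := fun i ω => X i ω - μ)
    ((hLp 2).sub (memLp_const μ))
    (fun i j hij => (hpair hij).comp (measurable_sub_const μ) (measurable_sub_const μ))
    (fun i => (hident i).comp (measurable_sub_const μ))
    (by simp [integral_sub hint (integrable_const μ), hμ])
  set Q : ℕ → Ω → ℝ := fun n ω => ∑ k ∈ range r, r.choose k *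
    (μ - sampleMean (fun i => X i ω) n) ^ (r - 1 - k) * sampleMean (fun i => (X i ω - μ) ^ k) n
  have hR : TendstoInMeasure P (fun n ω => r * μr1 - Q n ω) atTop fun _ => 0 := by
    refine tendstoInMeasure_of_tendsto_ae (fun n => ?_) ?_
    · have hXm (i : ℕ) : AEMeasurable (X i) P := (hident i).aemeasurable_fst
      simp only [Q, sampleMean]
      fun_prop
    · filter_upwards [ae_tendsto_sum_choose_mul_sampleMean hpair hident hint hμ r
        fun k _ => MemLp.integrable_sub_const_pow (hLp k) μ] with ω hω
      simpa [hμr1] using hω.const_sub (r * μr1)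
  refine (hY.tendstoInMeasure_mul hR).congr_left fun n => ae_of_all _ fun ω => ?_
  have := sqrt_mul_sampleMean_sub_pow (fun i => X i ω) μ n r
  simp only [Q, sampleMean] at this ⊢
  linear_combination -this

/-- For i.i.d. observations with mean `μ` and finite moments of all orders, the sample
`r`-th central moment satisfies
`√n m̂_r = (1/√n) Σ (Xᵢ-μ)^r - r μ_{r-1} (1/√n) Σ (Xᵢ-μ) + o_p(1)`,
where `m̂_r = (1/n) Σ (Xᵢ - X̄)^r`: the difference tends to 0 in probability. -/
theorem sample_central_moment_expansion {Ω : Type*} [MeasurableSpace Ω]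
    (P : Measure Ω) [IsProbabilityMeasure P] (X : ℕ → Ω → ℝ)
    (hmeas : ∀ i, Measurable (X i))
    (hindep : iIndepFun X P)
    (hident : ∀ i, IdentDistrib (X i) (X 0) P P)
    (hLp : ∀ p : ℕ, MemLp (X 0) p P)
    (μ : ℝ) (hμ : ∫ ω, X 0 ω ∂P = μ)
    (r : ℕ) (hr : 1 ≤ r)
    (μr1 : ℝ) (hμr1 : μr1 = ∫ ω, (X 0 ω - μ) ^ (r - 1) ∂P) :
    TendstoInMeasure P
      (fun (n : ℕ) (ω : Ω) =>
        Real.sqrt n *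
            ((1 / (n : ℝ)) *
              ∑ i ∈ range n, (X i ω - (1 / (n : ℝ)) * ∑ j ∈ range n, X j ω) ^ r) -
          ((1 / Real.sqrt n) * ∑ i ∈ range n, (X i ω - μ) ^ r -
            (r : ℝ) * μr1 * ((1 / Real.sqrt n) * ∑ i ∈ range n, (X i ω - μ))))
      atTop (fun _ => 0) :=
  sample_central_moment_expansion_general P X hindep hident hLp μ hμ r μr1 hμr1
end
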